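/- Fix Δt > 0, an integer K ≥ 1, and N×N complex Hermitian matrices H^0, H^1, …, H^{K-1}. Define U^0 = exp(−i Δt H^0) and P^1 = U^0 P^0 (U^0)†, and for k = 1, …, K−1 define U^k = exp(−2 i Δt H^k) and P^{k+1} = U^k P^{k-1} (U^k)†. If the initial matrix P^0 is Hermitian, idempotent, and has trace c, then for every k with 0 ≤ k ≤ K, the matrix P^k is Hermitian, idempotent, and has trace c. -/

import Mathlib

open Matrix

lemma mmut_conj_step {N : ℕ} (z : ℂ) (hz : star z = -z)
    (Hm Pm : Matrix (Fin N) (Fin N) ℂ) (hHm : Hmᴴ = Hm) (h1 : Pmᴴ = Pm)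
    (h2 : Pm * Pm = Pm) :
    (NormedSpace.exp (z • Hm) * Pm * (NormedSpace.exp (z • Hm))ᴴ)ᴴ =
        NormedSpace.exp (z • Hm) * Pm * (NormedSpace.exp (z • Hm))ᴴ ∧
      (NormedSpace.exp (z • Hm) * Pm * (NormedSpace.exp (z • Hm))ᴴ) *
        (NormedSpace.exp (z • Hm) * Pm * (NormedSpace.exp (z • Hm))ᴴ) =
        NormedSpace.exp (z • Hm) * Pm * (NormedSpace.exp (z • Hm))ᴴ ∧
      (NormedSpace.exp (z • Hm) * Pm * (NormedSpace.exp (z • Hm))ᴴ).trace = Pm.trace := by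
  set U := NormedSpace.exp (z • Hm) with hU
  have hUH : Uᴴ = NormedSpace.exp ((-z) • Hm) := by
    rw [hU, ← Matrix.exp_conjTranspose, conjTranspose_smul, hHm, hz]
  have hcomm : Commute ((-z) • Hm) (z • Hm) :=
    ((Commute.refl Hm).smul_left (-z)).smul_right z
  have hUU : Uᴴ * U = 1 := by
    rw [hUH, hU, ← Matrix.exp_add_of_commute _ _ hcomm]
    simp [← add_smul]
  refine ⟨?_, ?_, ?_⟩
  · simp [conjTranspose_mul, h1, mul_assoc]
  · calc U * Pm * Uᴴ * (U * Pm * Uᴴ) = U * (Pm * (Uᴴ * U) * Pm) * Uᴴ := by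
          simp [mul_assoc]
      _ = U * Pm * Uᴴ := by rw [hUU]; simp [h2, mul_assoc]
  · rw [Matrix.trace_mul_cycle, hUU, one_mul]

/-- The MMUT discretization of the TDHF equation preserves Hermitian symmetry,
idempotency, and the trace of the density matrices `P^k` for all `0 ≤ k ≤ K`. -/
theorem mmut_scheme_preserves_properties {N K : ℕ} (hK : 1 ≤ K) (Δt : ℝ) (hΔt : 0 < Δt)
    (H P : ℕ → Matrix (Fin N) (Fin N) ℂ) (c : ℂ)
    (hH : ∀ k < K, (H k)ᴴ = H k)
    (hfirst : P 1 =
      NormedSpace.exp ((-Complex.I * (Δt : ℂ)) • H 0) * P 0 *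
        (NormedSpace.exp ((-Complex.I * (Δt : ℂ)) • H 0))ᴴ)
    (hrec : ∀ k, 1 ≤ k → k ≤ K - 1 → P (k + 1) =
      NormedSpace.exp ((-(2 * Complex.I) * (Δt : ℂ)) • H k) * P (k - 1) *
        (NormedSpace.exp ((-(2 * Complex.I) * (Δt : ℂ)) • H k))ᴴ)
    (hHerm : (P 0)ᴴ = P 0) (hIdem : P 0 * P 0 = P 0) (hTr : (P 0).trace = c) :
    ∀ k ≤ K, (P k)ᴴ = P k ∧ P k * P k = P k ∧ (P k).trace = c := by
  intro k
  induction k using Nat.strong_induction_on with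
  | _ k ih =>
    intro hk
    match k with
    | 0 => exact ⟨hHerm, hIdem, hTr⟩
    | 1 =>
      have hz : star (-Complex.I * (Δt : ℂ)) = -(-Complex.I * (Δt : ℂ)) := by
        simp only [star_mul', star_neg, Complex.star_def, Complex.conj_I, Complex.conj_ofReal]
        ring
      have := mmut_conj_step (-Complex.I * (Δt : ℂ)) hz (H 0) (P 0) (hH 0 hK) hHerm hIdem
      rw [hfirst]
      exact ⟨this.1, this.2.1, this.2.2.trans hTr⟩
    | (m + 2) =>
      obtain ⟨h1, h2, h3⟩ := ih m (by omega) (by omega)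
      have hz : star (-(2 * Complex.I) * (Δt : ℂ)) = -(-(2 * Complex.I) * (Δt : ℂ)) := by
        simp only [star_mul', star_neg, Complex.star_def, Complex.conj_I, Complex.conj_ofReal,
          map_ofNat]
        ring
      have hrec' := hrec (m + 1) (by omega) (by omega)
      simp only [Nat.add_sub_cancel] at hrec'
      have := mmut_conj_step (-(2 * Complex.I) * (Δt : ℂ)) hz (H (m + 1)) (P m)
        (hH (m + 1) (by omega)) h1 h2
      rw [hrec']
      exact ⟨this.1, this.2.1, this.2.2.trans h3⟩
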